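/- For a strongly connected finite directed graph on n ≥ 2 vertices, for every vertex v and every d ≥ 0, the closeness centrality c(v) = (n−1)/f(v) satisfies c(v) ≤ (n−1)/(f_d(v) − γ̃_{d+1}(v) + (d+2)·(n − n_d(v))), provided the denominator is positive, where f_d(v) is the farness restricted to distance ≤ d, γ̃_{d+1}(v) = Σ_{u : dist(v,u)=d} outdeg(u), and n_d(v) is the number of vertices at distance ≤ d from v. -/

import Mathlib

open Finset

variable {V : Type*}

/-- `steps r n v w` : there is a walk of length `n` from `v` to `w` along relation `r`. -/
def steps (r : V → V → Prop) : ℕ → V → V → Prop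
  | 0, v, w => v = w
  | n+1, v, w => ∃ u, r v u ∧ steps r n u w

/-- `w` is reachable from `v`. -/
def reach (r : V → V → Prop) (v w : V) : Prop := ∃ n, steps r n v w

/-- shortest-path distance (number of edges). -/
noncomputable def ddist (r : V → V → Prop) (v w : V) : ℕ := sInf {n | steps r n v w}

open scoped Classical in
/-- set of vertices reachable from `v`. -/
noncomputable def Rset (r : V → V → Prop) [Fintype V] (v : V) : Finset V :=
  univ.filter (fun w => reach r v w)

/-- number of vertices reachable from `v`. -/
noncomputable def rnum (r : V → V → Prop) [Fintype V] (v : V) : ℕ := (Rset r v).card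

/-- farness of `v`. -/
noncomputable def farn (r : V → V → Prop) [Fintype V] (v : V) : ℕ :=
  ∑ w ∈ Rset r v, ddist r v w

open scoped Classical in
/-- ball of radius `d` around `v`. -/
noncomputable def ball (r : V → V → Prop) [Fintype V] (v : V) (d : ℕ) : Finset V :=
  univ.filter (fun w => reach r v w ∧ ddist r v w ≤ d)

/-- number of vertices at distance at most `d` from `v`. -/
noncomputable def nball (r : V → V → Prop) [Fintype V] (v : V) (d : ℕ) : ℕ := (ball r v d).card

open scoped Classical in
/-- set of vertices at distance exactly `d` from `v`. -/
noncomputable def sphere (r : V → V → Prop) [Fintype V] (v : V) (d : ℕ) : Finset V :=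
  univ.filter (fun w => reach r v w ∧ ddist r v w = d)

/-- number of vertices at distance exactly `d` from `v`. -/
noncomputable def gam (r : V → V → Prop) [Fintype V] (v : V) (d : ℕ) : ℕ := (sphere r v d).card

/-- farness of `v` restricted to distance at most `d`. -/
noncomputable def fd (r : V → V → Prop) [Fintype V] (v : V) (d : ℕ) : ℕ :=
  ∑ w ∈ ball r v d, ddist r v w

open scoped Classical in
/-- out-degree of `u`. -/
noncomputable def outdeg (r : V → V → Prop) [Fintype V] (u : V) : ℕ :=
  (univ.filter (fun w => r u w)).card

/-- `gtil r v d` = upper bound γ̃_{d+1}(v) = Σ_{u : dist(v,u)=d} outdeg(u). -/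
noncomputable def gtil (r : V → V → Prop) [Fintype V] (v : V) (d : ℕ) : ℕ :=
  ∑ u ∈ sphere r v d, outdeg r u


/-!
Every vertex outside the ball of radius `d` around `v` is at distance at least `d + 2` from `v`,
except those on the sphere of radius `d + 1`, which are at distance exactly `d + 1`; and each of
those is an out-neighbour of a vertex on the sphere of radius `d`, so there are at most
`γ̃_{d+1}(v)` of them. Hence `f(v) ≥ f_d(v) + (d + 2)(n - n_d(v)) - γ̃_{d+1}(v)`, and the
closeness `(n - 1) / f(v)` is antitone in `f(v)`.
-/

open scoped Classical

section Distance

variable {r : V → V → Prop}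

lemma steps_succ_iff_exists_last {n : ℕ} {v w : V} :
    steps r (n + 1) v w ↔ ∃ u, steps r n v u ∧ r u w := by
  induction n generalizing v with
  | zero =>
    constructor
    · rintro ⟨u, hvu, rfl⟩; exact ⟨v, rfl, hvu⟩
    · rintro ⟨u, rfl, huw⟩; exact ⟨w, huw, rfl⟩
  | succ n ih =>
    constructor
    · rintro ⟨a, hva, haw⟩
      obtain ⟨u, hau, huw⟩ := ih.mp haw
      exact ⟨u, ⟨a, hva, hau⟩, huw⟩
    · rintro ⟨u, ⟨a, hva, hau⟩, huw⟩
      exact ⟨a, hva, ih.mpr ⟨u, hau, huw⟩⟩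

lemma steps_ddist {v w : V} (h : reach r v w) : steps r (ddist r v w) v w :=
  Nat.sInf_mem h

lemma ddist_le_of_steps {n : ℕ} {v w : V} (h : steps r n v w) : ddist r v w ≤ n :=
  Nat.sInf_le h

lemma exists_pred_of_ddist_eq_succ {d : ℕ} {v w : V} (hw : reach r v w)
    (hd : ddist r v w = d + 1) : ∃ u, reach r v u ∧ ddist r v u = d ∧ r u w := by
  have hsteps : steps r (d + 1) v w := hd ▸ steps_ddist hw
  obtain ⟨u, hvu, huw⟩ := steps_succ_iff_exists_last.mp hsteps
  have hu : reach r v u := ⟨d, hvu⟩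
  have hle : ddist r v u ≤ d := ddist_le_of_steps hvu
  have hge : ddist r v w ≤ ddist r v u + 1 :=
    ddist_le_of_steps (steps_succ_iff_exists_last.mpr ⟨u, steps_ddist hu, huw⟩)
  exact ⟨u, hu, by omega, huw⟩

end Distance

section Farness

variable [Fintype V] (r : V → V → Prop) (v : V) (d : ℕ)

lemma gam_succ_le_gtil : gam r v (d + 1) ≤ gtil r v d := by
  have hsub : sphere r v (d + 1) ⊆ (sphere r v d).biUnion (fun u => univ.filter (r u)) := by
    intro w hw
    simp only [sphere, mem_filter, mem_univ, true_and] at hw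
    obtain ⟨u, hu, hud, huw⟩ := exists_pred_of_ddist_eq_succ hw.1 hw.2
    exact mem_biUnion.mpr ⟨u, by simp [sphere, hu, hud], by simp [huw]⟩
  exact (card_le_card hsub).trans card_biUnion_le

variable {r v}

lemma farn_eq_fd_add_sum_compl_ball (hv : ∀ w, reach r v w) :
    farn r v = fd r v d + ∑ w ∈ (ball r v d)ᶜ, ddist r v w := by
  have hR : Rset r v = univ := by ext w; simp [Rset, hv w]
  rw [farn, hR, fd, ← sum_add_sum_compl (ball r v d)]

lemma mul_card_compl_ball_le (hv : ∀ w, reach r v w) :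
    (d + 2) * #(ball r v d)ᶜ ≤ ∑ w ∈ (ball r v d)ᶜ, ddist r v w + gam r v (d + 1) := by
  have hsphere : sphere r v (d + 1) = (ball r v d)ᶜ.filter (fun w => ddist r v w = d + 1) := by
    ext w
    simp only [sphere, ball, mem_filter, mem_compl, mem_univ, true_and, hv w, not_le]
    exact ⟨fun h => ⟨by omega, h⟩, And.right⟩
  have hpoint : ∀ w ∈ (ball r v d)ᶜ,
      d + 2 ≤ ddist r v w + if ddist r v w = d + 1 then 1 else 0 := by
    intro w hw
    have : d < ddist r v w := by simpa [ball, hv w] using hw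
    split_ifs <;> omega
  calc (d + 2) * #(ball r v d)ᶜ = ∑ _w ∈ (ball r v d)ᶜ, (d + 2) := by
        rw [sum_const, smul_eq_mul, mul_comm]
    _ ≤ ∑ w ∈ (ball r v d)ᶜ, (ddist r v w + if ddist r v w = d + 1 then 1 else 0) :=
        sum_le_sum hpoint
    _ = ∑ w ∈ (ball r v d)ᶜ, ddist r v w + gam r v (d + 1) := by
      rw [sum_add_distrib, sum_boole, gam, hsphere, Nat.cast_id]

lemma fd_sub_gtil_add_le_farn (hv : ∀ w, reach r v w) :
    (fd r v d : ℝ) - gtil r v d + (d + 2) * ((Fintype.card V : ℝ) - nball r v d)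
      ≤ farn r v := by
  have hcompl : (#(ball r v d)ᶜ : ℝ) = (Fintype.card V : ℝ) - nball r v d := by
    rw [card_compl, Nat.cast_sub (card_le_univ _), nball]
  have hfarn : (farn r v : ℝ) = fd r v d + ∑ w ∈ (ball r v d)ᶜ, (ddist r v w : ℝ) := by
    exact_mod_cast farn_eq_fd_add_sum_compl_ball d hv
  have hmul : ((d + 2) * #(ball r v d)ᶜ : ℝ)
      ≤ ∑ w ∈ (ball r v d)ᶜ, (ddist r v w : ℝ) + gam r v (d + 1) := by
    exact_mod_cast mul_card_compl_ball_le d hv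
  have hgam : (gam r v (d + 1) : ℝ) ≤ gtil r v d := by
    exact_mod_cast gam_succ_le_gtil r v d
  rw [← hcompl]
  linarith

end Farness

theorem closeness_upper_bound_strongly_connected_general [Fintype V] (r : V → V → Prop)
    (hsc : ∀ v w : V, reach r v w) (v : V) (d : ℕ)
    (hpos : 0 < (fd r v d : ℝ) - (gtil r v d : ℝ)
        + (d + 2) * ((Fintype.card V : ℝ) - (nball r v d : ℝ))) :
    ((Fintype.card V : ℝ) - 1) / (farn r v : ℝ) ≤
      ((Fintype.card V : ℝ) - 1) /
        ((fd r v d : ℝ) - (gtil r v d : ℝ)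
          + (d + 2) * ((Fintype.card V : ℝ) - (nball r v d : ℝ))) := by
  have hn : (0 : ℝ) ≤ (Fintype.card V : ℝ) - 1 :=
    sub_nonneg.mpr (Nat.one_le_cast.mpr (Fintype.card_pos_iff.mpr ⟨v⟩))
  exact div_le_div_of_nonneg_left hn hpos (fd_sub_gtil_add_le_farn d (hsc v))

theorem closeness_upper_bound_strongly_connected [Fintype V] (r : V → V → Prop)
    (hsc : ∀ v w : V, reach r v w) (hn : 2 ≤ Fintype.card V) (v : V) (d : ℕ)
    (hpos : 0 < (fd r v d : ℝ) - (gtil r v d : ℝ)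
        + (d + 2) * ((Fintype.card V : ℝ) - (nball r v d : ℝ))) :
    ((Fintype.card V : ℝ) - 1) / (farn r v : ℝ) ≤
      ((Fintype.card V : ℝ) - 1) /
        ((fd r v d : ℝ) - (gtil r v d : ℝ)
          + (d + 2) * ((Fintype.card V : ℝ) - (nball r v d : ℝ))) :=
  closeness_upper_bound_strongly_connected_general r hsc v d hpos
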